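/- arXiv:2002.01884 — 2 statements merged into one kernel-verified Lean document; each statement's English description precedes it below -/
import Mathlib

section
/- Let m > 0, b > 0 and c > 1. If x > 0 satisfies I_m(x/b)/I_{m−1}(x/b) = 1/c (the mode equation of the McKay Type I distribution with parameters m, b, c), then (2m − 1)bc/(c² − 1) < x < (bc/(c² − 1))·[m − 1/2 + √((m + 1/2)² − 2m/c²)] < 2mbc/(c² − 1). -/
/-
With `t = x / b` the mode equation reads `I_{m-1}(t) = c I_m(t)`, so the bounds follow from two
Turán-type inequalities between `I_{m-1}(t)` and `I_m(t)`:
`t² (I_{m-1}² - I_m²) < (2m - 1) t I_{m-1} I_m + 2m I_m²`, a quadratic inequality in `t` whose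
positive root is the upper bound, and, for `m > 1/2`, `(2m - 1) I_{m-1} I_m < t (I_{m-1}² - I_m²)`,
which is the lower bound. Both are proved coefficientwise: by the Cauchy product, `I_μ I_ν` is
`(t/2)^(μ+ν)` times a power series in `(t/2)²` whose coefficients have a closed Gamma-function form
by the Chu–Vandermonde identity, and neighbouring coefficients are related by rational factors.
-/

open Real MeasureTheory

/-- Modified Bessel function of the first kind. -/
noncomputable def besselI (ν x : ℝ) : ℝ :=
  ∑' k : ℕ, (x / 2) ^ (ν + 2 * (k : ℝ)) / (Real.Gamma (ν + (k : ℝ) + 1) * (k.factorial : ℝ))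

open Finset Nat

lemma add_natCast_add_one_pos {ν : ℝ} (hν : -1 < ν) (k : ℕ) : 0 < ν + k + 1 := by
  linarith [k.cast_nonneg (α := ℝ)]

lemma Gamma_add_natCast_eq_eval_mul {s : ℝ} (hs : 0 < s) (n : ℕ) :
    Gamma (s + n) = (ascPochhammer ℝ n).eval s * Gamma s := by
  induction n with
  | zero => simp
  | succ n ih =>
    rw [cast_succ, ← add_assoc, Gamma_add_one (by positivity), ih, ascPochhammer_succ_eval]
    ring

lemma Ring.choose_eq_Gamma_div {a : ℝ} {n : ℕ} (h : 0 < a - n + 1) :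
    Ring.choose a n = Gamma (a + 1) / (Gamma (a - n + 1) * n !) := by
  have hΓ := (Gamma_pos_of_pos h).ne'
  have hfac : (n ! : ℝ) ≠ 0 := by positivity
  rw [Ring.choose_eq_smul, Polynomial.descPochhammer_smeval_eq_ascPochhammer,
    Polynomial.ascPochhammer_smeval_eq_eval,
    show a + 1 = a - n + 1 + n by ring, Gamma_add_natCast_eq_eval_mul h, smul_eq_mul]
  field_simp

noncomputable def besselCoeff (ν : ℝ) (k : ℕ) : ℝ := 1 / (Gamma (ν + k + 1) * k !)

section besselCoeff

variable {ν : ℝ}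

lemma besselCoeff_pos (hν : -1 < ν) (k : ℕ) : 0 < besselCoeff ν k := by
  have := Gamma_pos_of_pos (add_natCast_add_one_pos hν k)
  unfold besselCoeff
  positivity

lemma besselCoeff_succ (hν : -1 < ν) (k : ℕ) :
    besselCoeff ν (k + 1) = besselCoeff ν k / ((ν + k + 1) * (k + 1)) := by
  have hpos := add_natCast_add_one_pos hν k
  have := (Gamma_pos_of_pos hpos).ne'
  rw [besselCoeff, besselCoeff, cast_succ, ← add_assoc, Gamma_add_one hpos.ne', factorial_succ]
  field_simp
  push_cast
  ring

lemma summable_pow_mul_besselCoeff (hν : -1 < ν) (u : ℝ) :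
    Summable fun k : ℕ => u ^ k * besselCoeff ν k := by
  refine summable_of_ratio_norm_eventually_le (r := 1 / 2) (by norm_num) ?_
  filter_upwards [Filter.eventually_ge_atTop ⌈2 * |u|⌉₊] with k hk
  have hk' : 2 * |u| ≤ k := (le_ceil _).trans (by exact_mod_cast hk)
  have hpos := add_natCast_add_one_pos hν k
  have hc := besselCoeff_pos hν k
  have hratio : |u| / ((ν + k + 1) * (k + 1)) ≤ 1 / 2 := by
    rw [div_le_div_iff₀ (by positivity) two_pos]
    nlinarith [abs_nonneg u]
  calc ‖u ^ (k + 1) * besselCoeff ν (k + 1)‖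
      = |u| / ((ν + k + 1) * (k + 1)) * ‖u ^ k * besselCoeff ν k‖ := by
        simp only [besselCoeff_succ hν, Real.norm_eq_abs, abs_mul, abs_pow, abs_div,
          abs_of_pos hc, abs_of_pos hpos, abs_of_pos (k.cast_add_one_pos (α := ℝ))]
        ring
    _ ≤ 1 / 2 * ‖u ^ k * besselCoeff ν k‖ := by gcongr

end besselCoeff

lemma besselI_eq_rpow_mul_tsum (ν : ℝ) {t : ℝ} (ht : 0 < t) :
    besselI ν t = (t / 2) ^ ν * ∑' k : ℕ, ((t / 2) ^ 2) ^ k * besselCoeff ν k := by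
  rw [besselI, ← tsum_mul_left]
  congr 1 with k
  rw [rpow_add (by positivity), show 2 * (k : ℝ) = ((2 * k : ℕ) : ℝ) by push_cast; ring,
    rpow_natCast, pow_mul, besselCoeff]
  ring

lemma besselI_pos {ν t : ℝ} (hν : -1 < ν) (ht : 0 < t) : 0 < besselI ν t := by
  rw [besselI_eq_rpow_mul_tsum ν ht]
  refine mul_pos (by positivity) ((summable_pow_mul_besselCoeff hν _).tsum_pos
    (fun k => (mul_pos (by positivity) (besselCoeff_pos hν k)).le) 0 ?_)
  simpa using besselCoeff_pos hν 0

noncomputable def besselProdCoeff (μ ν : ℝ) (K : ℕ) : ℝ :=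
  ∑ p ∈ antidiagonal K, besselCoeff μ p.1 * besselCoeff ν p.2

noncomputable def besselProdSeries (μ ν u : ℝ) : ℝ := ∑' K : ℕ, u ^ K * besselProdCoeff μ ν K

section besselProdCoeff

variable {μ ν : ℝ}

lemma besselProdCoeff_comm (μ ν : ℝ) (K : ℕ) : besselProdCoeff μ ν K = besselProdCoeff ν μ K := by
  rw [besselProdCoeff, besselProdCoeff, ← Nat.sum_antidiagonal_swap]
  simp only [Prod.fst_swap, Prod.snd_swap, mul_comm]

lemma besselProdCoeff_pos (hμ : -1 < μ) (hν : -1 < ν) (K : ℕ) : 0 < besselProdCoeff μ ν K :=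
  sum_pos (fun p _ => mul_pos (besselCoeff_pos hμ p.1) (besselCoeff_pos hν p.2))
    ⟨(0, K), by simp⟩

lemma besselProdCoeff_zero (μ ν : ℝ) :
    besselProdCoeff μ ν 0 = 1 / (Gamma (μ + 1) * Gamma (ν + 1)) := by
  simp [besselProdCoeff, besselCoeff, mul_comm]

lemma sum_antidiagonal_pow_mul_besselCoeff (μ ν u : ℝ) (K : ℕ) :
    ∑ p ∈ antidiagonal K, u ^ p.1 * besselCoeff μ p.1 * (u ^ p.2 * besselCoeff ν p.2) =
      u ^ K * besselProdCoeff μ ν K := by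
  rw [besselProdCoeff, mul_sum]
  refine sum_congr rfl fun p hp => ?_
  rw [← mem_antidiagonal.mp hp, pow_add]
  ring

lemma summable_norm_pow_mul_besselCoeff (hν : -1 < ν) (u : ℝ) :
    Summable fun k : ℕ => ‖u ^ k * besselCoeff ν k‖ :=
  (summable_pow_mul_besselCoeff hν u).norm

lemma summable_pow_mul_besselProdCoeff (hμ : -1 < μ) (hν : -1 < ν) (u : ℝ) :
    Summable fun K : ℕ => u ^ K * besselProdCoeff μ ν K := by
  simpa only [sum_antidiagonal_pow_mul_besselCoeff] using
    (summable_norm_sum_mul_antidiagonal_of_summable_norm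
      (summable_norm_pow_mul_besselCoeff hμ u) (summable_norm_pow_mul_besselCoeff hν u)).of_norm

lemma hasSum_besselProdSeries (hμ : -1 < μ) (hν : -1 < ν) (u : ℝ) :
    HasSum (fun K : ℕ => u ^ K * besselProdCoeff μ ν K) (besselProdSeries μ ν u) :=
  (summable_pow_mul_besselProdCoeff hμ hν u).hasSum

lemma besselI_mul_besselI (hμ : -1 < μ) (hν : -1 < ν) {t : ℝ} (ht : 0 < t) :
    besselI μ t * besselI ν t = (t / 2) ^ μ * (t / 2) ^ ν * besselProdSeries μ ν ((t / 2) ^ 2) := by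
  rw [besselI_eq_rpow_mul_tsum μ ht, besselI_eq_rpow_mul_tsum ν ht, mul_mul_mul_comm,
    tsum_mul_tsum_eq_tsum_sum_antidiagonal_of_summable_norm
      (summable_norm_pow_mul_besselCoeff hμ _) (summable_norm_pow_mul_besselCoeff hν _)]
  simp only [sum_antidiagonal_pow_mul_besselCoeff, besselProdSeries]

lemma besselProdCoeff_eq (hμ : -1 < μ) (hν : -1 < ν) {K : ℕ}
    (hK : 0 < μ + ν + K + 1) :
    besselProdCoeff μ ν K = Gamma (μ + ν + 2 * K + 1) /
      (K ! * Gamma (μ + K + 1) * Gamma (ν + K + 1) * Gamma (μ + ν + K + 1)) := by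
  have hΓμ := (Gamma_pos_of_pos (add_natCast_add_one_pos hμ K)).ne'
  have hΓν := (Gamma_pos_of_pos (add_natCast_add_one_pos hν K)).ne'
  -- The terms form a Chu–Vandermonde convolution, which sums to `choose (μ + ν + 2K) K`.
  have hterm : ∀ p ∈ antidiagonal K, besselCoeff μ p.1 * besselCoeff ν p.2 =
      Ring.choose (ν + K) p.1 * Ring.choose (μ + K) p.2 /
        (Gamma (μ + K + 1) * Gamma (ν + K + 1)) := by
    rintro ⟨i, j⟩ hij
    obtain rfl : i + j = K := mem_antidiagonal.mp hij
    have hi := add_natCast_add_one_pos hμ i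
    have hj := add_natCast_add_one_pos hν j
    have := (Gamma_pos_of_pos hi).ne'
    have := (Gamma_pos_of_pos hj).ne'
    push_cast at hΓμ hΓν ⊢
    rw [Ring.choose_eq_Gamma_div (by linarith), Ring.choose_eq_Gamma_div (by linarith),
      show ν + (i + j) - i + 1 = ν + j + 1 by ring, show μ + (i + j) - j + 1 = μ + i + 1 by ring,
      besselCoeff, besselCoeff]
    field_simp
  rw [besselProdCoeff, sum_congr rfl hterm, ← sum_div,
    ← Ring.add_choose_eq K (Commute.all _ _),
    Ring.choose_eq_Gamma_div (by linarith),
    show ν + K + (μ + K) + 1 = μ + ν + 2 * K + 1 by ring,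
    show ν + K + (μ + K) - K + 1 = μ + ν + K + 1 by ring]
  have := (Gamma_pos_of_pos hK).ne'
  field_simp

lemma besselProdCoeff_add_one_right (hμ : -1 < μ) (hν : -1 < ν) {K : ℕ}
    (hK : 0 < μ + ν + K + 1) :
    (ν + K + 1) * (μ + ν + K + 1) * besselProdCoeff μ (ν + 1) K =
      (μ + ν + 2 * K + 1) * besselProdCoeff μ ν K := by
  have hν' := add_natCast_add_one_pos hν K
  rw [besselProdCoeff_eq hμ (by linarith) (by linarith), besselProdCoeff_eq hμ hν hK,
    show μ + (ν + 1) + 2 * K + 1 = (μ + ν + 2 * K + 1) + 1 by ring,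
    show ν + 1 + K + 1 = (ν + K + 1) + 1 by ring,
    show μ + (ν + 1) + K + 1 = (μ + ν + K + 1) + 1 by ring,
    Gamma_add_one (by linarith [K.cast_nonneg (α := ℝ)]), Gamma_add_one hν'.ne',
    Gamma_add_one hK.ne']
  have := (Gamma_pos_of_pos (add_natCast_add_one_pos hμ K)).ne'
  have := (Gamma_pos_of_pos hν').ne'
  have := (Gamma_pos_of_pos hK).ne'
  field_simp

lemma besselProdCoeff_add_one_add_one (hμ : -1 < μ) (hν : -1 < ν) (K : ℕ) :
    (μ + ν + K + 2) * besselProdCoeff (μ + 1) (ν + 1) K =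
      (K + 1) * besselProdCoeff μ ν (K + 1) := by
  rw [besselProdCoeff_eq (by linarith) (by linarith) (by linarith),
    besselProdCoeff_eq hμ hν (by push_cast; linarith), factorial_succ]
  push_cast
  rw [show μ + 1 + (ν + 1) + 2 * K + 1 = μ + ν + 2 * (K + 1) + 1 by ring,
    show μ + 1 + K + 1 = μ + (K + 1) + 1 by ring, show ν + 1 + K + 1 = ν + (K + 1) + 1 by ring,
    show μ + 1 + (ν + 1) + K + 1 = (μ + ν + (K + 1) + 1) + 1 by ring,
    Gamma_add_one (s := μ + ν + (K + 1) + 1) (by linarith)]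
  have := (Gamma_pos_of_pos (show 0 < μ + (K + 1) + 1 by linarith [K.cast_nonneg (α := ℝ)])).ne'
  have := (Gamma_pos_of_pos (show 0 < ν + (K + 1) + 1 by linarith [K.cast_nonneg (α := ℝ)])).ne'
  have := (Gamma_pos_of_pos (show 0 < μ + ν + (K + 1) + 1 by linarith)).ne'
  have : μ + ν + (K + 1) + 1 ≠ 0 := by linarith
  field_simp
  ring

end besselProdCoeff

section coefficientInequalities

variable {m : ℝ}

lemma besselProdCoeff_zero_eq (hm : 0 < m) :
    4 * besselProdCoeff (m - 1) (m - 1) 0 =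
      (4 * m - 2) * besselProdCoeff (m - 1) m 0 + 2 * m * besselProdCoeff m m 0 := by
  have := (Gamma_pos_of_pos hm).ne'
  simp only [besselProdCoeff_zero, sub_add_cancel, Gamma_add_one hm.ne']
  field_simp
  ring

lemma besselProdCoeff_zero_le (hm : 0 < m) :
    (2 * m - 1) * besselProdCoeff (m - 1) m 0 ≤ 2 * besselProdCoeff (m - 1) (m - 1) 0 := by
  have := Gamma_pos_of_pos hm
  simp only [besselProdCoeff_zero, sub_add_cancel, Gamma_add_one hm.ne']
  rw [mul_one_div, mul_one_div, div_le_div_iff₀ (by positivity) (by positivity)]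
  nlinarith [sq_nonneg (Gamma m)]

lemma besselProdCoeff_succ_relations (hm : 0 < m) (K : ℕ) :
    (m + K + 1) * (2 * m + K) * besselProdCoeff (m - 1) m (K + 1) =
        (2 * m + 2 * K + 1) * besselProdCoeff (m - 1) (m - 1) (K + 1) ∧
      (m + K + 1) * (2 * m + K + 1) * besselProdCoeff m m (K + 1) =
        (2 * m + 2 * K + 2) * besselProdCoeff (m - 1) m (K + 1) ∧
      (2 * m + K) * besselProdCoeff m m K = (K + 1) * besselProdCoeff (m - 1) (m - 1) (K + 1) := by
  have hm1 : -1 < m - 1 := by linarith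
  have hx := besselProdCoeff_add_one_right hm1 hm1 (K := K + 1) (by push_cast; linarith)
  have hy := besselProdCoeff_add_one_right (μ := m) (by linarith) hm1 (K := K + 1)
    (by push_cast; linarith)
  have hz := besselProdCoeff_add_one_add_one hm1 hm1 K
  rw [sub_add_cancel] at hx hy hz
  rw [besselProdCoeff_comm m (m - 1)] at hy
  push_cast at hx hy
  exact ⟨by linear_combination hx, by linear_combination hy, by linear_combination hz⟩

lemma four_mul_besselProdCoeff_succ_lt (hm : 0 < m) (K : ℕ) :
    4 * besselProdCoeff (m - 1) (m - 1) (K + 1) <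
      (4 * m - 2) * besselProdCoeff (m - 1) m (K + 1) + 2 * m * besselProdCoeff m m (K + 1) +
        4 * besselProdCoeff m m K := by
  obtain ⟨hx, hy, hz⟩ := besselProdCoeff_succ_relations hm K
  set e := besselProdCoeff (m - 1) (m - 1) (K + 1)
  have he : 0 < e := besselProdCoeff_pos (by linarith) (by linarith) _
  have key : (m + K + 1) * (2 * m + K) * (2 * m + K + 1) *
      ((4 * m - 2) * besselProdCoeff (m - 1) m (K + 1) + 2 * m * besselProdCoeff m m (K + 1) +
        4 * besselProdCoeff m m K - 4 * e) = 2 * (K + 1) * (2 * m + 1) * e := by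
    linear_combination 4 * (m + K + 1) * (2 * m + K + 1) * hz +
      ((4 * m - 2) * (2 * m + K + 1) + 4 * m) * hx + 2 * m * (2 * m + K) * hy
  rw [← sub_pos, ← mul_pos_iff_of_pos_left (show 0 < (m + K + 1) * (2 * m + K) * (2 * m + K + 1)
    by positivity), key]
  positivity

lemma two_mul_sub_one_mul_besselProdCoeff_succ_lt (hm : 1 / 2 < m) (K : ℕ) :
    (2 * m - 1) * besselProdCoeff (m - 1) m (K + 1) + 2 * besselProdCoeff m m K <
      2 * besselProdCoeff (m - 1) (m - 1) (K + 1) := by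
  obtain ⟨hx, -, hz⟩ := besselProdCoeff_succ_relations (by linarith) K
  set e := besselProdCoeff (m - 1) (m - 1) (K + 1)
  have he : 0 < e := besselProdCoeff_pos (by linarith) (by linarith) _
  have key : (m + K + 1) * (2 * m + K) *
      (2 * e - (2 * m - 1) * besselProdCoeff (m - 1) m (K + 1) - 2 * besselProdCoeff m m K) =
        (2 * m - 1) * e := by
    linear_combination -(2 * m - 1) * hx - 2 * (m + K + 1) * hz
  rw [← sub_pos, sub_add_eq_sub_sub,
    ← mul_pos_iff_of_pos_left (show 0 < (m + K + 1) * (2 * m + K) by positivity), key]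
  exact mul_pos (by linarith) he

end coefficientInequalities

lemma lt_add_mul_of_hasSum_of_succ_lt {f g h : ℕ → ℝ} {F G H u : ℝ} (hf : HasSum f F)
    (hg : HasSum g G) (hh : HasSum h H) (h0 : f 0 ≤ g 0)
    (hsucc : ∀ K, f (K + 1) < g (K + 1) + u * h K) : F < G + u * H := by
  have hf' := (hasSum_nat_add_iff' 1).mpr hf
  have hg' := (hasSum_nat_add_iff' 1).mpr hg
  simp only [range_one, sum_singleton] at hf' hg'
  have := hasSum_lt (fun K => (hsucc K).le) (hsucc 0) hf' (hg'.add (hh.mul_left u))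
  linarith

section besselInequalities

variable {m t : ℝ}

lemma besselI_adjacent_products (hm : 0 < m) (ht : 0 < t) :
    besselI (m - 1) t ^ 2 =
        ((t / 2) ^ (m - 1)) ^ 2 * besselProdSeries (m - 1) (m - 1) ((t / 2) ^ 2) ∧
      besselI (m - 1) t * besselI m t =
        ((t / 2) ^ (m - 1)) ^ 2 * (t / 2) * besselProdSeries (m - 1) m ((t / 2) ^ 2) ∧
      besselI m t ^ 2 =
        ((t / 2) ^ (m - 1)) ^ 2 * (t / 2) ^ 2 * besselProdSeries m m ((t / 2) ^ 2) := by
  have hm1 : -1 < m - 1 := by linarith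
  have hm0 : -1 < m := by linarith
  have hw : (t / 2) ^ m = (t / 2) ^ (m - 1) * (t / 2) := by
    rw [← rpow_add_one (by positivity), sub_add_cancel]
  refine ⟨?_, ?_, ?_⟩
  · rw [sq, besselI_mul_besselI hm1 hm1 ht]; ring
  · rw [besselI_mul_besselI hm1 hm0 ht, hw]; ring
  · rw [sq, besselI_mul_besselI hm0 hm0 ht, hw]; ring

theorem sq_mul_besselI_sq_sub_lt (hm : 0 < m) (ht : 0 < t) :
    t ^ 2 * (besselI (m - 1) t ^ 2 - besselI m t ^ 2) <
      (2 * m - 1) * t * (besselI (m - 1) t * besselI m t) + 2 * m * besselI m t ^ 2 := by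
  have hm1 : -1 < m - 1 := by linarith
  have hm0 : -1 < m := by linarith
  obtain ⟨hA, hAB, hB⟩ := besselI_adjacent_products hm ht
  have hp := rpow_pos_of_pos (half_pos ht) (m - 1)
  set w := t / 2 with hw
  set u := w ^ 2
  have hu : 0 < u := by positivity
  have hseries : 4 * besselProdSeries (m - 1) (m - 1) u <
      ((4 * m - 2) * besselProdSeries (m - 1) m u + 2 * m * besselProdSeries m m u) +
        u * (4 * besselProdSeries m m u) := by
    refine lt_add_mul_of_hasSum_of_succ_lt ((hasSum_besselProdSeries hm1 hm1 u).mul_left 4)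
      (((hasSum_besselProdSeries hm1 hm0 u).mul_left _).add
        ((hasSum_besselProdSeries hm0 hm0 u).mul_left _))
      ((hasSum_besselProdSeries hm0 hm0 u).mul_left 4) ?_ fun K => ?_
    · simpa using (besselProdCoeff_zero_eq hm).le
    · have := mul_lt_mul_of_pos_left (four_mul_besselProdCoeff_succ_lt hm K) (pow_pos hu (K + 1))
      rw [pow_succ] at this ⊢
      linarith
  have := mul_lt_mul_of_pos_left hseries (show 0 < (w ^ (m - 1)) ^ 2 * u by positivity)
  rw [hA, hAB, hB, show t = 2 * w by rw [hw]; ring]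
  linarith

theorem two_mul_sub_one_mul_besselI_mul_lt (hm : 1 / 2 < m) (ht : 0 < t) :
    (2 * m - 1) * (besselI (m - 1) t * besselI m t) <
      t * (besselI (m - 1) t ^ 2 - besselI m t ^ 2) := by
  have hm1 : -1 < m - 1 := by linarith
  have hm0 : -1 < m := by linarith
  obtain ⟨hA, hAB, hB⟩ := besselI_adjacent_products (m := m) (by linarith) ht
  have hp := rpow_pos_of_pos (half_pos ht) (m - 1)
  set w := t / 2 with hw
  set u := w ^ 2
  have hu : 0 < u := by positivity
  have hseries : (2 * m - 1) * besselProdSeries (m - 1) m u <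
      2 * besselProdSeries (m - 1) (m - 1) u + u * (-2 * besselProdSeries m m u) := by
    refine lt_add_mul_of_hasSum_of_succ_lt ((hasSum_besselProdSeries hm1 hm0 u).mul_left _)
      ((hasSum_besselProdSeries hm1 hm1 u).mul_left 2)
      ((hasSum_besselProdSeries hm0 hm0 u).mul_left (-2)) ?_ fun K => ?_
    · simpa using besselProdCoeff_zero_le (by linarith)
    · have := mul_lt_mul_of_pos_left (two_mul_sub_one_mul_besselProdCoeff_succ_lt hm K)
        (pow_pos hu (K + 1))
      rw [pow_succ] at this ⊢
      linarith
  have := mul_lt_mul_of_pos_left hseries (show 0 < (w ^ (m - 1)) ^ 2 * w by positivity)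
  rw [hA, hAB, hB, show t = 2 * w by rw [hw]; ring]
  linarith

end besselInequalities

section mode

variable {m c t : ℝ}

lemma quadratic_lt_of_besselI_eq_mul (hm : 0 < m) (ht : 0 < t)
    (hmode : besselI (m - 1) t = c * besselI m t) :
    (c ^ 2 - 1) * t ^ 2 < (2 * m - 1) * c * t + 2 * m := by
  have hB := besselI_pos (show -1 < m by linarith) ht
  have h := sq_mul_besselI_sq_sub_lt hm ht
  rw [hmode] at h
  refine lt_of_mul_lt_mul_right (a := besselI m t ^ 2) ?_ (sq_nonneg _)
  linarith

lemma lt_mul_of_besselI_eq_mul (hm : 1 / 2 < m) (ht : 0 < t)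
    (hmode : besselI (m - 1) t = c * besselI m t) : (2 * m - 1) * c < (c ^ 2 - 1) * t := by
  have hB := besselI_pos (show -1 < m by linarith) ht
  have h := two_mul_sub_one_mul_besselI_mul_lt hm ht
  rw [hmode] at h
  refine lt_of_mul_lt_mul_right (a := besselI m t ^ 2) ?_ (sq_nonneg _)
  linarith

lemma lt_of_quadratic_lt (hc : 1 < c) (h : (c ^ 2 - 1) * t ^ 2 < (2 * m - 1) * c * t + 2 * m) :
    t < c / (c ^ 2 - 1) * (m - 1 / 2 + √((m + 1 / 2) ^ 2 - 2 * m / c ^ 2)) := by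
  have hc0 : 0 < c := by linarith
  have hc2 : 0 < c ^ 2 - 1 := by nlinarith
  have hsq : ((c ^ 2 - 1) * t - c * (m - 1 / 2)) ^ 2 < c ^ 2 * (m + 1 / 2) ^ 2 - 2 * m := by
    linarith [mul_lt_mul_of_pos_left h hc2]
  have hroot : √(c ^ 2 * (m + 1 / 2) ^ 2 - 2 * m) = c * √((m + 1 / 2) ^ 2 - 2 * m / c ^ 2) := by
    rw [show c ^ 2 * (m + 1 / 2) ^ 2 - 2 * m = c ^ 2 * ((m + 1 / 2) ^ 2 - 2 * m / c ^ 2) by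
      field_simp, sqrt_mul (sq_nonneg c), sqrt_sq hc0.le]
  have := hroot ▸ lt_sqrt_of_sq_lt hsq
  rw [div_mul_eq_mul_div, lt_div_iff₀ hc2]
  linarith

end mode

theorem stmt_14 (m b c : ℝ) (hm : 0 < m) (hb : 0 < b) (hc : 1 < c) (x : ℝ) (hx : 0 < x)
    (hmode : besselI m (x / b) / besselI (m - 1) (x / b) = 1 / c) :
    (2 * m - 1) * b * c / (c ^ 2 - 1) < x ∧
    x < b * c / (c ^ 2 - 1) *
      (m - 1 / 2 + Real.sqrt ((m + 1 / 2) ^ 2 - 2 * m / c ^ 2)) ∧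
    b * c / (c ^ 2 - 1) * (m - 1 / 2 + Real.sqrt ((m + 1 / 2) ^ 2 - 2 * m / c ^ 2)) <
      2 * m * b * c / (c ^ 2 - 1) := by
  obtain ⟨t, rfl⟩ : ∃ t, x = b * t := ⟨x / b, by field_simp⟩
  rw [mul_div_cancel_left₀ t hb.ne'] at hmode
  have ht : 0 < t := pos_of_mul_pos_right hx hb.le
  have hc0 : 0 < c := by linarith
  have hc2 : 0 < c ^ 2 - 1 := by nlinarith
  have hmode' : besselI (m - 1) t = c * besselI m t := by
    rw [div_eq_div_iff (besselI_pos (by linarith) ht).ne' hc0.ne'] at hmode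
    linarith
  have hsqrt : √((m + 1 / 2) ^ 2 - 2 * m / c ^ 2) < m + 1 / 2 := by
    rw [sqrt_lt' (by linarith)]
    linarith [show 0 < 2 * m / c ^ 2 by positivity]
  refine ⟨?_, ?_, ?_⟩
  · rw [div_lt_iff₀ hc2]
    rcases le_or_gt m (1 / 2) with hm2 | hm2
    · nlinarith [mul_pos hb hc0]
    · linarith [mul_lt_mul_of_pos_left (lt_mul_of_besselI_eq_mul hm2 ht hmode') hb]
  · simpa only [mul_div_assoc, mul_assoc] using mul_lt_mul_of_pos_left
      (lt_of_quadratic_lt hc (quadratic_lt_of_besselI_eq_mul hm ht hmode')) hb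
  · rw [div_mul_eq_mul_div, div_lt_div_iff_of_pos_right hc2]
    linarith [mul_lt_mul_of_pos_left (show m - 1 / 2 + √((m + 1 / 2) ^ 2 - 2 * m / c ^ 2) < 2 * m
      by linarith) (mul_pos hb hc0)]
end

section
/- Fix λ > 1, θ > 0 and δ = 0, and let M : (0, ∞) → ℝ be a function such that for every σ > 0, M(σ) satisfies (√(θ² + σ²)/θ) · K_{λ−3/2}((√(θ² + σ²)/σ²)·M(σ)) / K_{λ−1/2}((√(θ² + σ²)/σ²)·M(σ)) = 1 (i.e. M(σ) is the mode of the variance-gamma distribution VG(2λ, θ, σ, 0)). Then M(σ) → 2θ(λ − 1) as σ → 0⁺. -/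
/-
Write `c = √(θ² + σ²)` and `x = c M(σ) / σ²`, `ν = λ - 1/2`, `μ = λ - 3/2`. The mode equation says
`K_μ(x) / K_ν(x) = θ / c → 1`. Since `|μ| < ν`, the ratio `K_μ / K_ν` stays below `1 - ε` on every
bounded interval, so `x → ∞`. The mode equation also gives the exact identity
`M = (c + θ) · x (K_ν(x) - K_μ(x)) / K_ν(x)`, and Laplace's method (substituting `t = u / √x` in the
integral) shows `y (K_ν(y) - K_μ(y)) / K_ν(y) → (ν² - μ²) / 2 = λ - 1`.
-/

open Real MeasureTheory

/-- Modified Bessel function of the second kind. -/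
noncomputable def besselK (ν x : ℝ) : ℝ :=
  ∫ t in Set.Ioi (0:ℝ), Real.exp (-x * Real.cosh t) * Real.cosh (ν * t)

open Set Filter Topology

namespace Real

lemma one_add_sq_div_two_le_cosh (t : ℝ) : 1 + t ^ 2 / 2 ≤ cosh t := by
  have h := sum_le_hasSum (Finset.range 2) (fun n _ ↦ by rw [pow_mul]; positivity)
    (hasSum_cosh t)
  norm_num [Finset.sum_range_succ] at h
  linarith

lemma exp_sub_one_le_mul_exp (s : ℝ) : exp s - 1 ≤ s * exp s := by
  have h := add_one_le_exp (-s)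
  have h' : exp (-s) * exp s = 1 := by rw [← exp_add, neg_add_cancel, exp_zero]
  nlinarith [exp_pos s]

lemma cosh_sub_one_le (t : ℝ) : cosh t - 1 ≤ t ^ 2 / 2 * exp (t ^ 2 / 2) :=
  (sub_le_sub_right (cosh_le_exp_half_sq t) 1).trans (exp_sub_one_le_mul_exp _)

lemma cosh_le_exp_abs (t : ℝ) : cosh t ≤ exp |t| := by
  rw [cosh_eq]
  linarith [exp_le_exp.2 (le_abs_self t), exp_le_exp.2 (neg_le_abs t)]

end Real

noncomputable def besselKIntegrand (ν x t : ℝ) : ℝ := exp (-x * cosh t) * cosh (ν * t)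

lemma besselK_eq_integral (ν x : ℝ) : besselK ν x = ∫ t in Ioi 0, besselKIntegrand ν x t := rfl

lemma besselKIntegrand_pos (ν x t : ℝ) : 0 < besselKIntegrand ν x t := by
  unfold besselKIntegrand; positivity

lemma continuous_besselKIntegrand (ν x : ℝ) : Continuous (besselKIntegrand ν x) := by
  unfold besselKIntegrand; fun_prop

lemma antitone_besselKIntegrand (ν t : ℝ) : Antitone (besselKIntegrand ν · t) := by
  intro x y hxy
  simp only [besselKIntegrand]
  gcongr

lemma besselKIntegrand_le_of_abs_le {ν μ : ℝ} (hμν : |μ| ≤ |ν|) (x t : ℝ) :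
    besselKIntegrand μ x t ≤ besselKIntegrand ν x t := by
  unfold besselKIntegrand
  gcongr
  rw [cosh_le_cosh, abs_mul, abs_mul]
  gcongr

lemma integrableOn_besselKIntegrand (ν : ℝ) {x : ℝ} (hx : 0 < x) :
    IntegrableOn (besselKIntegrand ν x) (Ioi 0) := by
  refine integrable_of_isBigO_exp_neg one_pos (continuous_besselKIntegrand ν x).continuousOn
    (Asymptotics.IsBigO.of_bound 1 ?_)
  filter_upwards [eventually_ge_atTop (2 * (|ν| + 1) / x), eventually_ge_atTop 0] with t ht ht0
  have hνt : cosh (ν * t) ≤ exp (|ν| * t) := by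
    simpa [abs_mul, abs_of_nonneg ht0] using cosh_le_exp_abs (ν * t)
  have hxt : 2 * (|ν| + 1) ≤ x * t := by rwa [div_le_iff₀' hx] at ht
  rw [one_mul, norm_of_nonneg (besselKIntegrand_pos ν x t).le, norm_of_nonneg (exp_pos _).le]
  calc besselKIntegrand ν x t ≤ exp (-x * (1 + t ^ 2 / 2)) * exp (|ν| * t) := by
        refine mul_le_mul (exp_le_exp.2 ?_) hνt (cosh_pos _).le (exp_pos _).le
        nlinarith [one_add_sq_div_two_le_cosh t]
    _ ≤ exp (-1 * t) := by
        rw [← exp_add]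
        gcongr
        nlinarith

lemma integral_Ioi_besselKIntegrand_pos (ν : ℝ) {x a : ℝ} (hx : 0 < x) (ha : 0 ≤ a) :
    0 < ∫ t in Ioi a, besselKIntegrand ν x t := by
  rw [setIntegral_pos_iff_support_of_nonneg_ae
    (Eventually.of_forall fun t ↦ (besselKIntegrand_pos ν x t).le)
    ((integrableOn_besselKIntegrand ν hx).mono_set (Ioi_subset_Ioi ha))]
  simp [Function.support, (besselKIntegrand_pos ν x _).ne']

lemma besselK_pos (ν : ℝ) {x : ℝ} (hx : 0 < x) : 0 < besselK ν x :=
  integral_Ioi_besselKIntegrand_pos ν hx le_rfl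

lemma two_mul_cosh_le_cosh {ν μ : ℝ} (hμν : |μ| < ν) {t : ℝ} (ht : log 4 / (ν - |μ|) ≤ t) :
    2 * cosh (μ * t) ≤ cosh (ν * t) := by
  have hd : 0 < ν - |μ| := by linarith
  have ht0 : 0 ≤ t := (div_pos (log_pos (by norm_num)) hd).le.trans ht
  have hμt : cosh (μ * t) ≤ exp (|μ| * t) := by
    simpa [abs_mul, abs_of_nonneg ht0] using cosh_le_exp_abs (μ * t)
  have hνt : exp (ν * t) ≤ 2 * cosh (ν * t) := by
    rw [cosh_eq]; linarith [exp_pos (-(ν * t))]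
  have hgap : 4 * exp (|μ| * t) ≤ exp (ν * t) := by
    have h4 : log 4 ≤ (ν - |μ|) * t := by rwa [div_le_iff₀' hd] at ht
    calc 4 * exp (|μ| * t) = exp (log 4 + |μ| * t) := by rw [exp_add, exp_log (by norm_num)]
      _ ≤ exp (ν * t) := exp_le_exp.2 (by linarith)
  linarith

lemma besselK_eq_integral_Ioc_add_integral_Ioi (ν : ℝ) {x t₀ : ℝ} (hx : 0 < x) (ht₀ : 0 ≤ t₀) :
    besselK ν x =
      (∫ t in Ioc 0 t₀, besselKIntegrand ν x t) + ∫ t in Ioi t₀, besselKIntegrand ν x t := by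
  rw [besselK_eq_integral, ← Ioc_union_Ioi_eq_Ioi ht₀]
  exact setIntegral_union Ioc_disjoint_Ioi_same measurableSet_Ioi
    ((integrableOn_besselKIntegrand ν hx).mono_set Ioc_subset_Ioi_self)
    ((integrableOn_besselKIntegrand ν hx).mono_set (Ioi_subset_Ioi ht₀))

lemma besselK_le_integral_Ioc_add_integral_Ioi (ν : ℝ) {x t₀ : ℝ} (hx : 0 < x) (ht₀ : 0 ≤ t₀) :
    besselK ν x ≤ (∫ t in Ioc 0 t₀, cosh (ν * t)) + ∫ t in Ioi t₀, besselKIntegrand ν x t := by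
  rw [besselK_eq_integral_Ioc_add_integral_Ioi ν hx ht₀]
  refine add_le_add_left (setIntegral_mono_on
    ((integrableOn_besselKIntegrand ν hx).mono_set Ioc_subset_Ioi_self)
    (continuous_cosh.comp (continuous_const_mul ν)).integrableOn_Ioc measurableSet_Ioc
    fun t _ ↦ mul_le_of_le_one_left (cosh_pos _).le (exp_le_one_iff.2 ?_)) _
  nlinarith [one_le_cosh t]

lemma besselK_le_sub_half_integral_Ioi {ν μ x : ℝ} (hμν : |μ| < ν) (hx : 0 < x) :
    besselK μ x ≤
      besselK ν x - (∫ t in Ioi (log 4 / (ν - |μ|)), besselKIntegrand ν x t) / 2 := by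
  have ht₀ : 0 ≤ log 4 / (ν - |μ|) :=
    div_nonneg (log_nonneg (by norm_num)) (by linarith [abs_nonneg μ])
  rw [besselK_eq_integral_Ioc_add_integral_Ioi μ hx ht₀,
    besselK_eq_integral_Ioc_add_integral_Ioi ν hx ht₀]
  have hhead : (∫ t in Ioc 0 (log 4 / (ν - |μ|)), besselKIntegrand μ x t) ≤
      ∫ t in Ioc 0 (log 4 / (ν - |μ|)), besselKIntegrand ν x t :=
    setIntegral_mono_on ((integrableOn_besselKIntegrand μ hx).mono_set Ioc_subset_Ioi_self)
      ((integrableOn_besselKIntegrand ν hx).mono_set Ioc_subset_Ioi_self) measurableSet_Ioc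
      fun t _ ↦ besselKIntegrand_le_of_abs_le (hμν.le.trans (le_abs_self ν)) x t
  have htail : (∫ t in Ioi (log 4 / (ν - |μ|)), besselKIntegrand μ x t) ≤
      (∫ t in Ioi (log 4 / (ν - |μ|)), besselKIntegrand ν x t) / 2 := by
    rw [← integral_div]
    refine setIntegral_mono_on ((integrableOn_besselKIntegrand μ hx).mono_set (Ioi_subset_Ioi ht₀))
      (((integrableOn_besselKIntegrand ν hx).mono_set (Ioi_subset_Ioi ht₀)).div_const 2)
      measurableSet_Ioi fun t ht ↦ ?_
    have := two_mul_cosh_le_cosh hμν (le_of_lt ht)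
    unfold besselKIntegrand
    nlinarith [exp_pos (-x * cosh t)]
  linarith

lemma exists_besselK_le_one_sub_mul {ν μ : ℝ} (hμν : |μ| < ν) (Y : ℝ) :
    ∃ ε > 0, ∀ y, 0 < y → y ≤ Y → besselK μ y ≤ (1 - ε) * besselK ν y := by
  set t₀ := log 4 / (ν - |μ|)
  have ht₀ : 0 ≤ t₀ := div_nonneg (log_nonneg (by norm_num)) (by linarith [abs_nonneg μ])
  set T := fun y ↦ ∫ t in Ioi t₀, besselKIntegrand ν y t
  set C := ∫ t in Ioc 0 t₀, cosh (ν * t)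
  set Y' := max Y 1
  have hC : 0 ≤ C := setIntegral_nonneg measurableSet_Ioc fun t _ ↦ (cosh_pos _).le
  have hTY' : 0 < T Y' := integral_Ioi_besselKIntegrand_pos ν (by positivity) ht₀
  refine ⟨T Y' / (2 * (C + T Y')), by positivity, fun y hy hyY ↦ ?_⟩
  have hT : T Y' ≤ T y := setIntegral_mono_on
    ((integrableOn_besselKIntegrand ν (by positivity)).mono_set (Ioi_subset_Ioi ht₀))
    ((integrableOn_besselKIntegrand ν hy).mono_set (Ioi_subset_Ioi ht₀)) measurableSet_Ioi
    fun t _ ↦ antitone_besselKIntegrand ν t (hyY.trans (le_max_left Y 1))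
  have hKν := besselK_le_integral_Ioc_add_integral_Ioi ν hy ht₀
  have hKμ := besselK_le_sub_half_integral_Ioi hμν hy
  have hε : T Y' / (2 * (C + T Y')) * besselK ν y ≤ T y / 2 := by
    rw [div_mul_eq_mul_div, div_le_div_iff₀ (by positivity) two_pos]
    nlinarith [mul_le_mul_of_nonneg_left hKν hTY'.le, mul_le_mul_of_nonneg_left hT hC]
  linarith

lemma tendsto_atTop_of_tendsto_besselK_div_besselK {α : Type*} {l : Filter α} {ν μ : ℝ}
    (hμν : |μ| < ν) {x : α → ℝ} (hx : ∀ᶠ a in l, 0 < x a)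
    (h : Tendsto (fun a ↦ besselK μ (x a) / besselK ν (x a)) l (𝓝 1)) :
    Tendsto x l atTop := by
  refine tendsto_atTop.2 fun Y ↦ ?_
  obtain ⟨ε, hε, hgap⟩ := exists_besselK_le_one_sub_mul hμν Y
  filter_upwards [hx, h.eventually (lt_mem_nhds (sub_lt_self 1 hε))] with a hxa hra
  by_contra! hY
  have := hgap _ hxa hY.le
  rw [lt_div_iff₀ (besselK_pos ν hxa)] at hra
  linarith

/-- The exponent `y (cosh t - 1)` of `exp y * besselK ν y` after the substitution `t = u / √y`. -/
noncomputable def laplacePhase (y u : ℝ) : ℝ := y * (cosh (u / √y) - 1)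

lemma sq_div_two_le_laplacePhase {y : ℝ} (hy : 0 < y) (u : ℝ) : u ^ 2 / 2 ≤ laplacePhase y u := by
  have h := one_add_sq_div_two_le_cosh (u / √y)
  rw [div_pow, sq_sqrt hy.le] at h
  unfold laplacePhase
  have : u ^ 2 / 2 = y * (u ^ 2 / y / 2) := by field_simp
  rw [this]
  gcongr
  linarith

lemma laplacePhase_le {y : ℝ} (hy : 0 < y) (u : ℝ) :
    laplacePhase y u ≤ u ^ 2 / 2 * exp (u ^ 2 / (2 * y)) := by
  have h := cosh_sub_one_le (u / √y)
  rw [div_pow, sq_sqrt hy.le, div_div, mul_comm y 2] at h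
  unfold laplacePhase
  calc y * (cosh (u / √y) - 1) ≤ y * (u ^ 2 / (2 * y) * exp (u ^ 2 / (2 * y))) := by
        gcongr
    _ = u ^ 2 / 2 * exp (u ^ 2 / (2 * y)) := by field_simp

lemma tendsto_laplacePhase (u : ℝ) : Tendsto (laplacePhase · u) atTop (𝓝 (u ^ 2 / 2)) := by
  have hexp : Tendsto (fun y : ℝ ↦ u ^ 2 / 2 * exp (u ^ 2 / (2 * y))) atTop (𝓝 (u ^ 2 / 2)) := by
    have : Tendsto (fun y : ℝ ↦ u ^ 2 / (2 * y)) atTop (𝓝 0) :=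
      tendsto_const_nhds.div_atTop (tendsto_id.const_mul_atTop two_pos)
    simpa using (continuous_exp.tendsto 0).comp this |>.const_mul (u ^ 2 / 2)
  refine tendsto_of_tendsto_of_tendsto_of_le_of_le' tendsto_const_nhds hexp ?_ ?_ <;>
    filter_upwards [eventually_gt_atTop 0] with y hy
  exacts [sq_div_two_le_laplacePhase hy u, laplacePhase_le hy u]

lemma integral_sq_mul_exp_neg_sq_div_two :
    ∫ u in Ioi 0, u ^ 2 * exp (-(u ^ 2 / 2)) = ∫ u in Ioi 0, exp (-(u ^ 2 / 2)) := by
  have h2 := integral_rpow_mul_exp_neg_mul_rpow two_pos (by norm_num : (-1 : ℝ) < 2)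
    (by norm_num : (0 : ℝ) < 1 / 2)
  have h0 := integral_rpow_mul_exp_neg_mul_rpow two_pos (by norm_num : (-1 : ℝ) < 0)
    (by norm_num : (0 : ℝ) < 1 / 2)
  simp only [rpow_two, rpow_zero, one_mul, neg_mul, one_div_mul_eq_div] at h2 h0
  rw [h2, h0, show (-(2 + 1) / 2 : ℝ) = -(0 + 1) / 2 + -1 by norm_num,
    rpow_add (by norm_num), rpow_neg_one, show ((2 : ℝ) + 1) / 2 = (0 + 1) / 2 + 1 by norm_num,
    Gamma_add_one (by norm_num)]
  ring

lemma integral_exp_neg_sq_div_two_pos : 0 < ∫ u in Ioi 0, exp (-(u ^ 2 / 2)) := by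
  have := integral_gaussian_Ioi (1 / 2)
  simp only [neg_mul, one_div_mul_eq_div] at this
  rw [this]
  positivity

lemma sqrt_mul_exp_mul_integral_exp_neg_mul_cosh (h : ℝ → ℝ) {y : ℝ} (hy : 0 < y) :
    √y * exp y * ∫ t in Ioi 0, exp (-y * cosh t) * h t =
      ∫ u in Ioi 0, exp (-laplacePhase y u) * h (u / √y) := by
  have hsubst := integral_comp_mul_left_Ioi (fun t ↦ exp (y - y * cosh t) * h t) 0
    (inv_pos.2 (sqrt_pos.2 hy))
  simp only [mul_zero, inv_inv, smul_eq_mul] at hsubst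
  have hexp : exp y * ∫ t in Ioi 0, exp (-y * cosh t) * h t =
      ∫ t in Ioi 0, exp (y - y * cosh t) * h t := by
    rw [← integral_const_mul]
    simp only [sub_eq_add_neg, exp_add, neg_mul, mul_assoc]
  rw [mul_assoc, hexp, ← hsubst]
  refine setIntegral_congr_fun measurableSet_Ioi fun u _ ↦ ?_
  simp only [laplacePhase, ← div_eq_inv_mul]
  ring_nf

lemma sqrt_mul_exp_mul_besselK (ν : ℝ) {y : ℝ} (hy : 0 < y) :
    √y * exp y * besselK ν y = ∫ u in Ioi 0, exp (-laplacePhase y u) * cosh (ν * (u / √y)) :=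
  sqrt_mul_exp_mul_integral_exp_neg_mul_cosh (fun t ↦ cosh (ν * t)) hy

lemma mul_sqrt_mul_exp_mul_besselK_sub_besselK_zero (ν : ℝ) {y : ℝ} (hy : 0 < y) :
    y * (√y * exp y * (besselK ν y - besselK 0 y)) =
      ∫ u in Ioi 0, exp (-laplacePhase y u) * laplacePhase y (ν * u) := by
  have hsub : y * (besselK ν y - besselK 0 y) =
      ∫ t in Ioi 0, exp (-y * cosh t) * (y * (cosh (ν * t) - 1)) := by
    rw [besselK_eq_integral, besselK_eq_integral, ← integral_sub
      (integrableOn_besselKIntegrand ν hy) (integrableOn_besselKIntegrand 0 hy),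
      ← integral_const_mul]
    simp only [besselKIntegrand, zero_mul, cosh_zero]
    ring_nf
  rw [mul_left_comm, hsub, sqrt_mul_exp_mul_integral_exp_neg_mul_cosh _ hy]
  simp only [laplacePhase, mul_div_assoc]

lemma exp_neg_laplacePhase_le {ν y : ℝ} (hy : 0 < y) (hνy : 2 * ν ^ 2 ≤ y) (u : ℝ) :
    exp (-laplacePhase y u) * exp ((ν * u) ^ 2 / (2 * y)) ≤ exp (-(1 / 4) * u ^ 2) := by
  rw [← exp_add]
  refine exp_le_exp.2 ?_
  have h1 := sq_div_two_le_laplacePhase hy u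
  have h2 : (ν * u) ^ 2 / (2 * y) ≤ u ^ 2 / 4 := by
    rw [div_le_div_iff₀ (by positivity) (by norm_num), mul_pow]
    nlinarith [sq_nonneg u]
  linarith

lemma tendsto_integral_exp_neg_laplacePhase_mul_cosh (ν : ℝ) :
    Tendsto (fun y ↦ ∫ u in Ioi 0, exp (-laplacePhase y u) * cosh (ν * (u / √y))) atTop
      (𝓝 (∫ u in Ioi 0, exp (-(u ^ 2 / 2)))) := by
  refine tendsto_integral_filter_of_dominated_convergence (fun u ↦ exp (-(1 / 4) * u ^ 2))
    (Eventually.of_forall fun y ↦ by unfold laplacePhase; fun_prop) ?_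
    (integrable_exp_neg_mul_sq (by norm_num)).integrableOn ?_
  · filter_upwards [eventually_gt_atTop 0, eventually_ge_atTop (2 * ν ^ 2)] with y hy hνy
    refine Eventually.of_forall fun u ↦ ?_
    rw [norm_of_nonneg (by positivity)]
    refine le_trans ?_ (exp_neg_laplacePhase_le hy hνy u)
    have hsq : (ν * (u / √y)) ^ 2 / 2 = (ν * u) ^ 2 / (2 * y) := by
      rw [mul_div_assoc', div_pow, sq_sqrt hy.le, div_div, mul_comm y]
    gcongr
    exact hsq ▸ cosh_le_exp_half_sq _
  · refine Eventually.of_forall fun u ↦ ?_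
    have hcosh : Tendsto (fun y ↦ cosh (ν * (u / √y))) atTop (𝓝 1) := by
      have h0 := ((tendsto_const_nhds (x := u)).div_atTop tendsto_sqrt_atTop).const_mul ν
      rw [mul_zero] at h0
      rw [← cosh_zero]; exact (continuous_cosh.tendsto 0).comp h0
    simpa using ((continuous_exp.tendsto _).comp (tendsto_laplacePhase u).neg).mul hcosh

lemma tendsto_integral_exp_neg_laplacePhase_mul_laplacePhase (ν : ℝ) :
    Tendsto (fun y ↦ ∫ u in Ioi 0, exp (-laplacePhase y u) * laplacePhase y (ν * u)) atTop
      (𝓝 (ν ^ 2 / 2 * ∫ u in Ioi 0, u ^ 2 * exp (-(u ^ 2 / 2)))) := by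
  rw [← integral_const_mul]
  refine tendsto_integral_filter_of_dominated_convergence
    (fun u ↦ ν ^ 2 / 2 * (u ^ 2 * exp (-(1 / 4) * u ^ 2)))
    (Eventually.of_forall fun y ↦ by unfold laplacePhase; fun_prop) ?_ ?_ ?_
  · filter_upwards [eventually_gt_atTop 0, eventually_ge_atTop (2 * ν ^ 2)] with y hy hνy
    refine Eventually.of_forall fun u ↦ ?_
    have hnn : 0 ≤ laplacePhase y (ν * u) :=
      (by positivity : (0 : ℝ) ≤ (ν * u) ^ 2 / 2).trans (sq_div_two_le_laplacePhase hy _)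
    rw [norm_of_nonneg (mul_nonneg (exp_pos _).le hnn)]
    calc exp (-laplacePhase y u) * laplacePhase y (ν * u)
        ≤ exp (-laplacePhase y u) * ((ν * u) ^ 2 / 2 * exp ((ν * u) ^ 2 / (2 * y))) := by
          gcongr; exact laplacePhase_le hy _
      _ = ν ^ 2 / 2 * u ^ 2 * (exp (-laplacePhase y u) * exp ((ν * u) ^ 2 / (2 * y))) := by
          ring
      _ ≤ ν ^ 2 / 2 * u ^ 2 * exp (-(1 / 4) * u ^ 2) := by
          gcongr; exact exp_neg_laplacePhase_le hy hνy u
      _ = ν ^ 2 / 2 * (u ^ 2 * exp (-(1 / 4) * u ^ 2)) := by ring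
  · have := (integrableOn_rpow_mul_exp_neg_mul_sq (by norm_num : (0 : ℝ) < 1 / 4)
      (by norm_num : (-1 : ℝ) < 2)).const_mul (ν ^ 2 / 2)
    simpa only [rpow_two] using this
  · refine Eventually.of_forall fun u ↦ ?_
    rw [show ν ^ 2 / 2 * (u ^ 2 * exp (-(u ^ 2 / 2))) = exp (-(u ^ 2 / 2)) * ((ν * u) ^ 2 / 2)
      by ring]
    exact ((continuous_exp.tendsto _).comp (tendsto_laplacePhase u).neg).mul
      (tendsto_laplacePhase (ν * u))

theorem tendsto_mul_besselK_sub_besselK_div_besselK (ν μ : ℝ) :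
    Tendsto (fun y ↦ y * (besselK ν y - besselK μ y) / besselK ν y) atTop
      (𝓝 ((ν ^ 2 - μ ^ 2) / 2)) := by
  have hI := integral_exp_neg_sq_div_two_pos
  have hlim := ((tendsto_integral_exp_neg_laplacePhase_mul_laplacePhase ν).sub
    (tendsto_integral_exp_neg_laplacePhase_mul_laplacePhase μ)).div
    (tendsto_integral_exp_neg_laplacePhase_mul_cosh ν) hI.ne'
  rw [integral_sq_mul_exp_neg_sq_div_two, ← sub_mul, mul_div_assoc, div_self hI.ne', mul_one,
    ← sub_div] at hlim
  refine hlim.congr' ?_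
  filter_upwards [eventually_gt_atTop 0] with y hy
  rw [Pi.div_apply, ← mul_sqrt_mul_exp_mul_besselK_sub_besselK_zero ν hy,
    ← mul_sqrt_mul_exp_mul_besselK_sub_besselK_zero μ hy, ← sqrt_mul_exp_mul_besselK ν hy]
  have : √y * exp y ≠ 0 := by positivity
  field_simp
  ring

theorem tendsto_of_besselK_mode_eq {ν μ θ : ℝ} (hμν : |μ| < ν) (hθ : 0 < θ) (M : ℝ → ℝ)
    (hMpos : ∀ σ : ℝ, 0 < σ → 0 < M σ)
    (hmode : ∀ σ : ℝ, 0 < σ →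
      √(θ ^ 2 + σ ^ 2) / θ *
        (besselK μ (√(θ ^ 2 + σ ^ 2) / σ ^ 2 * M σ) /
          besselK ν (√(θ ^ 2 + σ ^ 2) / σ ^ 2 * M σ)) = 1) :
    Tendsto M (𝓝[>] 0) (𝓝 (θ * (ν ^ 2 - μ ^ 2))) := by
  set c := fun σ : ℝ ↦ √(θ ^ 2 + σ ^ 2)
  set x := fun σ ↦ c σ / σ ^ 2 * M σ
  have hc : Tendsto c (𝓝[>] 0) (𝓝 θ) := by
    refine tendsto_nhdsWithin_of_tendsto_nhds ?_
    simpa [c, sqrt_sq hθ.le] using (by fun_prop : Continuous c).tendsto 0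
  have hcpos : ∀ σ, 0 < c σ := fun σ ↦ sqrt_pos.2 (by positivity)
  have hxpos : ∀ σ, 0 < σ → 0 < x σ := fun σ hσ ↦ by have := hMpos σ hσ; positivity
  have hratio : ∀ σ, 0 < σ → besselK μ (x σ) / besselK ν (x σ) = θ / c σ := fun σ hσ ↦ by
    have h : c σ / θ * (besselK μ (x σ) / besselK ν (x σ)) = 1 := hmode σ hσ
    rw [div_mul_eq_mul_div, div_eq_one_iff_eq hθ.ne'] at h
    rw [eq_div_iff (hcpos σ).ne', ← h, mul_comm]
  have hx : Tendsto x (𝓝[>] 0) atTop := by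
    refine tendsto_atTop_of_tendsto_besselK_div_besselK hμν
      (eventually_nhdsWithin_of_forall hxpos) ?_
    rw [← div_self hθ.ne']
    exact (tendsto_const_nhds.div hc hθ.ne').congr'
      (eventually_nhdsWithin_of_forall fun σ hσ ↦ (hratio σ hσ).symm)
  have hM : ∀ σ, 0 < σ →
      M σ = (c σ + θ) * (x σ * (besselK ν (x σ) - besselK μ (x σ)) / besselK ν (x σ)) := by
    intro σ hσ
    have hc2 : c σ ^ 2 = θ ^ 2 + σ ^ 2 := sq_sqrt (by positivity)
    rw [mul_div_assoc, sub_div, div_self (besselK_pos ν (hxpos σ hσ)).ne', hratio σ hσ]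
    have := hcpos σ
    simp only [x]
    field_simp
    linear_combination (-M σ) * hc2
  have hlim := (hc.add_const θ).mul ((tendsto_mul_besselK_sub_besselK_div_besselK ν μ).comp hx)
  rw [show (θ + θ) * ((ν ^ 2 - μ ^ 2) / 2) = θ * (ν ^ 2 - μ ^ 2) by ring] at hlim
  exact hlim.congr' (eventually_nhdsWithin_of_forall fun σ hσ ↦ (hM σ hσ).symm)

theorem stmt_19 (lam θ : ℝ) (hlam : 1 < lam) (hθ : 0 < θ) (M : ℝ → ℝ)
    (hMpos : ∀ σ : ℝ, 0 < σ → 0 < M σ)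
    (hmode : ∀ σ : ℝ, 0 < σ →
      Real.sqrt (θ ^ 2 + σ ^ 2) / θ *
        (besselK (lam - 3 / 2) (Real.sqrt (θ ^ 2 + σ ^ 2) / σ ^ 2 * M σ) /
          besselK (lam - 1 / 2) (Real.sqrt (θ ^ 2 + σ ^ 2) / σ ^ 2 * M σ)) = 1) :
    Filter.Tendsto M (nhdsWithin 0 (Set.Ioi 0)) (nhds (2 * θ * (lam - 1))) := by
  have h := tendsto_of_besselK_mode_eq (abs_lt.2 ⟨by linarith, by linarith⟩) hθ M hMpos hmode
  rwa [show θ * ((lam - 1 / 2) ^ 2 - (lam - 3 / 2) ^ 2) = 2 * θ * (lam - 1) by ring] at h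
end
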